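/- arXiv:2204.13726 — 2 statements merged into one kernel-verified Lean document; each statement's English description precedes it below -/
import Mathlib

section
/- Let I be a nonempty finite set of bidders with value bounds v̄_i > 0. For value profiles (v_k)_{k∈I} with v_k ∈ [0, v̄_k] admitting a unique highest bidder, define the seller's ex-post regret as max_k v_k − t, where t is the winner i's payment: t = v_i − v̄_i/e if p < v̄_i/e ≤ v_i; t = v_i + p·log(p/v̄_i) if v̄_i/e ≤ p < v_i; t = 0 if v_i < v̄_i/e, with p = max_{k ≠ i} v_k (p = 0 if I = {i}). Then the supremum of the ex-post regret over all such profiles equals max_k v̄_k / e, and it is attained at every profile in which some bidder i with v̄_i = max_k v̄_k has v_i ∈ [v̄_i/e, v̄_i] and all other values are 0. -/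
/-- The seller's ex-post regret at a value profile `v` with (unique) highest
bidder `i`, under the second-price auction with bidder-specific random reserves:
highest value minus the winner's envelope payment. -/
noncomputable def expostRegret {ι : Type*} [Fintype ι] [Nonempty ι] [DecidableEq ι]
    (vbar v : ι → ℝ) (i : ι) : ℝ :=
  let p : ℝ := (Finset.univ.erase i).fold max 0 v
  let t : ℝ := if v i < vbar i / Real.exp 1 then 0
    else if p < vbar i / Real.exp 1 then v i - vbar i / Real.exp 1
    else v i + p * Real.log (p / vbar i)
  Finset.univ.sup' Finset.univ_nonempty v - t

lemma log_le_div_e (x : ℝ) (hx : 0 < x) : Real.log x ≤ x / Real.exp 1 := by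
  have h := Real.log_le_sub_one_of_pos (div_pos hx (Real.exp_pos 1))
  rw [Real.log_div hx.ne' (Real.exp_ne_zero 1), Real.log_exp] at h
  linarith

lemma key (c p : ℝ) (hc : 0 < c) (hp : 0 < p) :
    p * Real.log (c / p) ≤ c / Real.exp 1 := by
  have h := log_le_div_e (c / p) (div_pos hc hp)
  have := mul_le_mul_of_nonneg_left h hp.le
  calc p * Real.log (c / p) ≤ p * (c / p / Real.exp 1) := this
    _ = c / Real.exp 1 := by field_simp

lemma attain {ι : Type*} [Fintype ι] [Nonempty ι] [DecidableEq ι]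
    (vbar v : ι → ℝ) (i : ι) (hvb : 0 < vbar i)
    (hle : vbar i / Real.exp 1 ≤ v i) (h0 : ∀ k, k ≠ i → v k = 0) :
    expostRegret vbar v i = vbar i / Real.exp 1 := by
  have he : 0 < Real.exp 1 := Real.exp_pos 1
  have hvi : 0 < v i := lt_of_lt_of_le (div_pos hvb he) hle
  have hp : (Finset.univ.erase i).fold max 0 v = 0 := by
    apply le_antisymm
    · rw [Finset.fold_max_le]
      exact ⟨le_rfl, fun k hk => le_of_eq (h0 k (Finset.ne_of_mem_erase hk))⟩
    · rw [Finset.le_fold_max]; exact Or.inl le_rfl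
  have hsup : Finset.univ.sup' Finset.univ_nonempty v = v i := by
    apply le_antisymm
    · apply Finset.sup'_le
      intro k _
      by_cases hk : k = i
      · subst hk; exact le_rfl
      · rw [h0 k hk]; exact hvi.le
    · exact Finset.le_sup' v (Finset.mem_univ i)
  rw [expostRegret]
  simp only [hp, hsup]
  rw [if_neg (not_lt.mpr hle), if_pos (div_pos hvb he)]
  ring

lemma ub {ι : Type*} [Fintype ι] [Nonempty ι] [DecidableEq ι]
    (vbar v : ι → ℝ) (i : ι) (hvb : 0 < vbar i)
    (hv : ∀ k, 0 ≤ v k ∧ v k ≤ vbar k) (hi : ∀ k, k ≠ i → v k < v i) :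
    expostRegret vbar v i ≤ vbar i / Real.exp 1 := by
  have he : 0 < Real.exp 1 := Real.exp_pos 1
  set p := (Finset.univ.erase i).fold max 0 v with hpdef
  have hp0 : 0 ≤ p := by rw [hpdef, Finset.le_fold_max]; exact Or.inl le_rfl
  have hpv : p ≤ v i := by
    rw [hpdef, Finset.fold_max_le]
    exact ⟨(hv i).1, fun k hk => (hi k (Finset.ne_of_mem_erase hk)).le⟩
  have hsup : Finset.univ.sup' Finset.univ_nonempty v = v i := by
    apply le_antisymm
    · apply Finset.sup'_le
      intro k _
      by_cases hk : k = i
      · subst hk; exact le_rfl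
      · exact (hi k hk).le
    · exact Finset.le_sup' v (Finset.mem_univ i)
  rw [expostRegret]
  simp only [← hpdef, hsup]
  split_ifs with h1 h2
  · simpa using h1.le
  · linarith
  · push_neg at h1 h2
    have hppos : 0 < p := lt_of_lt_of_le (div_pos hvb he) h2
    have hlog : Real.log (p / vbar i) = - Real.log (vbar i / p) := by
      rw [Real.log_div hppos.ne' hvb.ne', Real.log_div hvb.ne' hppos.ne']; ring
    rw [hlog]
    have := key (vbar i) p hvb hppos
    linarith

/-- the supremum of the ex-post regret over all profiles with a
unique highest bidder equals `max_k v̄_k / e`, and it is attained at every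
profile in which some bidder `i` with `v̄_i = max_k v̄_k` has
`v_i ∈ [v̄_i/e, v̄_i]` and all other values are `0`. -/
theorem stmt_5 {ι : Type*} [Fintype ι] [Nonempty ι] [DecidableEq ι]
    (vbar : ι → ℝ) (hvbar : ∀ i, 0 < vbar i) :
    sSup {r : ℝ | ∃ v : ι → ℝ, (∀ k, 0 ≤ v k ∧ v k ≤ vbar k) ∧
        ∃ i, (∀ k, k ≠ i → v k < v i) ∧ r = expostRegret vbar v i}
      = Finset.univ.sup' Finset.univ_nonempty vbar / Real.exp 1 ∧
    ∀ (v : ι → ℝ) (i : ι), (∀ k, 0 ≤ v k ∧ v k ≤ vbar k) →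
      vbar i = Finset.univ.sup' Finset.univ_nonempty vbar →
      vbar i / Real.exp 1 ≤ v i → v i ≤ vbar i → (∀ k, k ≠ i → v k = 0) →
      expostRegret vbar v i
        = Finset.univ.sup' Finset.univ_nonempty vbar / Real.exp 1 := by
  have he : 0 < Real.exp 1 := Real.exp_pos 1
  set M := Finset.univ.sup' Finset.univ_nonempty vbar with hM
  obtain ⟨i0, _, hi0⟩ := Finset.exists_mem_eq_sup' Finset.univ_nonempty vbar
  have hi0M : vbar i0 = M := hi0.symm
  have hub : ∀ r ∈ {r : ℝ | ∃ v : ι → ℝ, (∀ k, 0 ≤ v k ∧ v k ≤ vbar k) ∧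
      ∃ i, (∀ k, k ≠ i → v k < v i) ∧ r = expostRegret vbar v i},
      r ≤ M / Real.exp 1 := by
    rintro r ⟨v, hv, i, hi, rfl⟩
    have h1 := ub vbar v i (hvbar i) hv hi
    have h2 : vbar i ≤ M := Finset.le_sup' vbar (Finset.mem_univ i)
    calc expostRegret vbar v i ≤ vbar i / Real.exp 1 := h1
      _ ≤ M / Real.exp 1 := by gcongr
  have hmem : M / Real.exp 1 ∈ {r : ℝ | ∃ v : ι → ℝ, (∀ k, 0 ≤ v k ∧ v k ≤ vbar k) ∧
      ∃ i, (∀ k, k ≠ i → v k < v i) ∧ r = expostRegret vbar v i} := by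
    refine ⟨fun k => if k = i0 then vbar i0 else 0, ?_, i0, ?_, ?_⟩
    · intro k
      by_cases hk : k = i0 <;> simp [hk, (hvbar _).le]
    · intro k hk; simp [hk, hvbar i0]
    · rw [attain vbar _ i0 (hvbar i0) ?_ ?_, hi0M]
      · simp only [if_pos rfl]
        exact div_le_self (hvbar i0).le (Real.one_le_exp zero_le_one)
      · intro k hk; simp [hk]
  constructor
  · apply le_antisymm
    · exact csSup_le ⟨_, hmem⟩ hub
    · exact le_csSup ⟨_, hub⟩ hmem
  · intro v i hv hiM hle hle' h0
    rw [attain vbar v i (hvbar i) hle h0, hiM]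
end

section
/- Let J be a finite set, v̄_j > 0 for j ∈ J, φ_j := φ_{v̄_j}, and ψ_j(z) := v̄_j/(e(1−z)²) for 0 ≤ z < 1 − 1/e and ψ_j(z) := 0 for 1 − 1/e ≤ z ≤ 1. Let Q_j : [0,1] → [0,1] be measurable for each j ∈ J and let U₀ ≥ 0. Define T(z) = Σ_{j∈J} φ_j(z)·Q_j(z) − U₀ − ∫_0^z Σ_{j∈J} ψ_j(s)·Q_j(s) ds. Then ∫_0^1 T(z) dz ≤ Σ_{j∈J} v̄_j / e. -/
/-!
By the envelope formula and Fubini, the expected payment is the expected virtual surplus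
`∫₀¹ Σ_j (φ_j(z) − (1 − z) ψ_j(z)) Q_j(z) dz − U₀`. For the equal-revenue quantile function the
virtual value `φ − (1 − z) ψ` vanishes on `[0, 1 − 1/e)` and equals `v̄` on `[1 − 1/e, 1]`, so with
`0 ≤ Q_j ≤ 1` the virtual surplus is at most `Σ_j v̄_j · (1/e)`.
-/

/-- The equal-revenue quantile function: `φ_{v̄}(z) = v̄/(e(1−z))` for
`z < 1 − 1/e` and `φ_{v̄}(z) = v̄` for `z ≥ 1 − 1/e`. -/
noncomputable def erQuantile (vb z : ℝ) : ℝ :=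
  if z < 1 - 1 / Real.exp 1 then vb / (Real.exp 1 * (1 - z)) else vb

/-- Its derivative off `z = 1 − 1/e`: `ψ(z) = v̄/(e(1−z)²)` for `z < 1 − 1/e`
and `0` for `z ≥ 1 − 1/e`. -/
noncomputable def erQuantileDeriv (vb z : ℝ) : ℝ :=
  if z < 1 - 1 / Real.exp 1 then vb / (Real.exp 1 * (1 - z) ^ 2) else 0

open MeasureTheory Set Real intervalIntegral
open scoped Interval

theorem intervalIntegrable_of_norm_le {E : Type*} [NormedAddCommGroup E] {μ : Measure ℝ}
    [IsLocallyFiniteMeasure μ] {f : ℝ → E} {a b C : ℝ} (hf : AEStronglyMeasurable f μ)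
    (hC : ∀ x ∈ Ι a b, ‖f x‖ ≤ C) : IntervalIntegrable f μ a b :=
  intervalIntegrable_const.mono_fun' hf.restrict
    ((ae_restrict_iff' measurableSet_uIoc).2 (ae_of_all _ hC))

theorem intervalIntegrable_sum_mul_of_norm_le {ι : Type*} [Fintype ι] {f q : ι → ℝ → ℝ}
    {C : ι → ℝ} {a b : ℝ} (hf : ∀ j, Measurable (f j)) (hfC : ∀ j z, ‖f j z‖ ≤ C j)
    (hq : ∀ j, Measurable (q j)) (hq1 : ∀ j, ∀ z ∈ Ι a b, ‖q j z‖ ≤ 1) :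
    IntervalIntegrable (fun z => ∑ j, f j z * q j z) volume a b := by
  simpa only [Finset.sum_fn, Pi.mul_apply] using IntervalIntegrable.sum Finset.univ fun j _ =>
    intervalIntegrable_of_norm_le ((hf j).mul (hq j)).aestronglyMeasurable
      fun z hz => norm_mul_le_of_le (hfC j z) (hq1 j z hz)

theorem integral_indicator_Ici_const {E : Type*} [NormedAddCommGroup E] [NormedSpace ℝ E]
    [CompleteSpace E] {a b s : ℝ} (hs : s ∈ Ioc a b) (e : E) :
    ∫ z in a..b, (Ici s).indicator (fun _ => e) z = (b - s) • e := by
  have hinter : Ici s ∩ Ioc a b = Icc s b := by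
    ext z; simp only [mem_inter_iff, mem_Ici, mem_Ioc, mem_Icc]; grind
  rw [integral_of_le (hs.1.le.trans hs.2), integral_indicator_const e measurableSet_Ici,
    measureReal_restrict_apply measurableSet_Ici, hinter, Real.volume_real_Icc_of_le hs.2]

theorem integral_primitive_eq_integral_sub_mul {g : ℝ → ℝ} {a b : ℝ} (hab : a ≤ b)
    (hg : IntervalIntegrable g volume a b) :
    ∫ z in a..b, ∫ s in a..z, g s = ∫ s in a..b, (b - s) * g s := by
  set μ := volume.restrict (Ioc a b)
  have : IsFiniteMeasure μ := isFiniteMeasure_restrict.2 measure_Ioc_lt_top.ne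
  set F : ℝ × ℝ → ℝ := {p | p.2 ≤ p.1}.indicator fun p => g p.2
  have hF : Integrable F (μ.prod μ) :=
    (hg.1.comp_snd μ).indicator (measurableSet_le measurable_snd measurable_fst)
  have inner_left : ∀ z ∈ Ioc a b, ∫ s in a..z, g s = ∫ s, F (z, s) ∂μ := fun z hz => by
    rw [← intervalIntegral.integral_indicator ⟨hz.1.le, hz.2⟩, integral_of_le hab]
    rfl
  have inner_right : ∀ s ∈ Ioc a b, ∫ z, F (z, s) ∂μ = (b - s) * g s := fun s hs => by
    rw [← smul_eq_mul, ← integral_indicator_Ici_const hs, integral_of_le hab]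
    rfl
  calc ∫ z in a..b, ∫ s in a..z, g s = ∫ z, ∫ s, F (z, s) ∂μ ∂μ := by
        rw [integral_of_le hab]; exact setIntegral_congr_fun measurableSet_Ioc inner_left
    _ = ∫ s, ∫ z, F (z, s) ∂μ ∂μ := integral_integral_swap hF
    _ = ∫ s in a..b, (b - s) * g s := by
        rw [integral_of_le hab]; exact setIntegral_congr_fun measurableSet_Ioc inner_right

theorem integral_sub_sub_primitive {A g : ℝ → ℝ} {a b : ℝ} (U : ℝ) (hab : a ≤ b)
    (hA : IntervalIntegrable A volume a b) (hg : IntervalIntegrable g volume a b) :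
    ∫ z in a..b, (A z - U - ∫ s in a..z, g s)
      = (∫ z in a..b, (A z - (b - z) * g z)) - (b - a) * U := by
  have hG : IntervalIntegrable (fun z => ∫ s in a..z, g s) volume a b :=
    (continuousOn_primitive_interval' hg left_mem_uIcc).intervalIntegrable
  have hbg : IntervalIntegrable (fun z => (b - z) * g z) volume a b :=
    hg.continuousOn_mul (by fun_prop)
  rw [integral_sub (hA.sub intervalIntegrable_const) hG, integral_sub hA intervalIntegrable_const,
    integral_sub hA hbg, intervalIntegral.integral_const,
    integral_primitive_eq_integral_sub_mul hab hg, smul_eq_mul]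
  ring

theorem one_lt_exp_one_mul_one_sub {z : ℝ} (hz : z < 1 - 1 / exp 1) : 1 < exp 1 * (1 - z) := by
  rw [← div_lt_iff₀' (exp_pos 1)]
  linarith

theorem erQuantile_measurable (vb : ℝ) : Measurable (erQuantile vb) :=
  Measurable.ite measurableSet_Iio (by fun_prop) measurable_const

theorem erQuantileDeriv_measurable (vb : ℝ) : Measurable (erQuantileDeriv vb) :=
  Measurable.ite measurableSet_Iio (by fun_prop) measurable_const

theorem abs_erQuantile_le {vb : ℝ} (hvb : 0 ≤ vb) (z : ℝ) : |erQuantile vb z| ≤ vb := by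
  unfold erQuantile
  split_ifs with hz
  · have h := one_lt_exp_one_mul_one_sub hz
    rw [abs_of_nonneg (by positivity), div_le_iff₀ (by positivity)]
    nlinarith
  · exact (abs_of_nonneg hvb).le

theorem abs_erQuantileDeriv_le {vb : ℝ} (hvb : 0 ≤ vb) (z : ℝ) :
    |erQuantileDeriv vb z| ≤ vb * exp 1 := by
  unfold erQuantileDeriv
  split_ifs with hz
  · have h := one_lt_exp_one_mul_one_sub hz
    have hpos : 0 < exp 1 * (1 - z) ^ 2 := by nlinarith [exp_pos 1]
    have hsq : 1 ≤ (exp 1 * (1 - z)) ^ 2 := by nlinarith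
    rw [abs_of_nonneg (div_nonneg hvb hpos.le), div_le_iff₀ hpos]
    nlinarith [mul_le_mul_of_nonneg_left hsq hvb]
  · simpa using mul_nonneg hvb (exp_pos 1).le

/-- Myerson's virtual value, in quantile space. -/
noncomputable def erVirtualValue (vb z : ℝ) : ℝ :=
  erQuantile vb z - (1 - z) * erQuantileDeriv vb z

theorem erVirtualValue_eq_indicator (vb : ℝ) :
    erVirtualValue vb = (Ici (1 - 1 / exp 1)).indicator fun _ => vb := by
  ext z
  unfold erVirtualValue erQuantile erQuantileDeriv
  by_cases hz : z < 1 - 1 / exp 1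
  · have h := one_lt_exp_one_mul_one_sub hz
    have h1 : 1 - z ≠ 0 := by nlinarith [exp_pos 1]
    rw [if_pos hz, if_pos hz, indicator_of_notMem (show z ∉ Ici _ from not_le.2 hz)]
    field_simp
    ring
  · rw [if_neg hz, if_neg hz, indicator_of_mem (show z ∈ Ici _ from not_lt.1 hz)]
    ring

theorem erVirtualValue_nonneg {vb : ℝ} (hvb : 0 ≤ vb) (z : ℝ) : 0 ≤ erVirtualValue vb z := by
  rw [erVirtualValue_eq_indicator]
  exact indicator_nonneg (fun _ _ => hvb) z

theorem intervalIntegrable_erVirtualValue (vb a b : ℝ) :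
    IntervalIntegrable (erVirtualValue vb) volume a b := by
  rw [erVirtualValue_eq_indicator]
  exact intervalIntegrable_of_norm_le
    (measurable_const.indicator measurableSet_Ici).aestronglyMeasurable
    fun z _ => norm_indicator_le_norm_self _ z

theorem integral_erVirtualValue (vb : ℝ) :
    ∫ z in (0 : ℝ)..1, erVirtualValue vb z = vb / exp 1 := by
  have hc : 1 - 1 / exp 1 ∈ Ioc (0 : ℝ) 1 :=
    ⟨by rw [sub_pos, div_lt_one (exp_pos 1)]; exact one_lt_exp_iff.2 one_pos,
      sub_le_self _ (by positivity)⟩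
  rw [erVirtualValue_eq_indicator, integral_indicator_Ici_const hc, smul_eq_mul]
  ring

theorem sum_erQuantile_mul_sub_le_sum_erVirtualValue {ι : Type*} [Fintype ι] {vbar q : ι → ℝ}
    (hvb : ∀ j, 0 ≤ vbar j) (hq : ∀ j, q j ≤ 1) (z : ℝ) :
    (∑ j, erQuantile (vbar j) z * q j) - (1 - z) * ∑ j, erQuantileDeriv (vbar j) z * q j
      ≤ ∑ j, erVirtualValue (vbar j) z := by
  rw [Finset.mul_sum, ← Finset.sum_sub_distrib]
  refine Finset.sum_le_sum fun j _ => ?_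
  calc _ = erVirtualValue (vbar j) z * q j := by unfold erVirtualValue; ring
    _ ≤ erVirtualValue (vbar j) z := mul_le_of_le_one_right (erVirtualValue_nonneg (hvb j) z) (hq j)

/-- the core revenue bound of Proposition 2: with interim
allocations `Q_j : [0,1] → [0,1]`, lowest-type utility `U₀ ≥ 0`, and interim
payment `T(z) = Σ_j φ_j(z)·Q_j(z) − U₀ − ∫_0^z Σ_j ψ_j(s)·Q_j(s) ds`, the
expected revenue satisfies `∫_0^1 T(z) dz ≤ Σ_j v̄_j/e`. -/
theorem stmt_9 {J : Type*} [Fintype J] (vbar : J → ℝ) (hvbar : ∀ j, 0 < vbar j)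
    (Q : J → ℝ → ℝ) (hQm : ∀ j, Measurable (Q j))
    (hQ : ∀ j, ∀ z ∈ Set.Icc (0:ℝ) 1, 0 ≤ Q j z ∧ Q j z ≤ 1)
    (U0 : ℝ) (hU0 : 0 ≤ U0) (T : ℝ → ℝ)
    (hT : ∀ z, T z = (∑ j, erQuantile (vbar j) z * Q j z) - U0
      - ∫ s in (0:ℝ)..z, ∑ j, erQuantileDeriv (vbar j) s * Q j s) :
    (∫ z in (0:ℝ)..1, T z) ≤ ∑ j, vbar j / Real.exp 1 := by
  have hvb : ∀ j, 0 ≤ vbar j := fun j => (hvbar j).le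
  have hQ1 : ∀ j, ∀ z ∈ Ι (0 : ℝ) 1, ‖Q j z‖ ≤ 1 := fun j z hz => by
    obtain ⟨h0, h1⟩ := hQ j z (Ioc_subset_Icc_self (by rwa [uIoc_of_le zero_le_one] at hz))
    rwa [Real.norm_eq_abs, abs_of_nonneg h0]
  have hA := intervalIntegrable_sum_mul_of_norm_le (fun j => erQuantile_measurable (vbar j))
    (fun j => abs_erQuantile_le (hvb j)) hQm hQ1
  have hg := intervalIntegrable_sum_mul_of_norm_le (fun j => erQuantileDeriv_measurable (vbar j))
    (fun j => abs_erQuantileDeriv_le (hvb j)) hQm hQ1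
  have hV : ∀ j ∈ Finset.univ, IntervalIntegrable (erVirtualValue (vbar j)) volume 0 1 :=
    fun j _ => intervalIntegrable_erVirtualValue _ 0 1
  have hsurplus := integral_mono_on zero_le_one (hA.sub (hg.continuousOn_mul (by fun_prop)))
    (by simpa only [Finset.sum_fn] using IntervalIntegrable.sum Finset.univ hV)
    fun z hz => sum_erQuantile_mul_sub_le_sum_erVirtualValue hvb (fun j => (hQ j z hz).2) z
  simp only [integral_finsetSum hV, integral_erVirtualValue] at hsurplus
  simp only [hT]
  rw [integral_sub_sub_primitive U0 zero_le_one hA hg]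
  linarith
end
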